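/- arXiv:2205.04866 — 4 statements merged into one kernel-verified Lean document; each statement's English description precedes it below -/
import Mathlib

section
/- For all natural numbers r, s there is an isomorphism of ℝ-algebras Cl(r+1, s+1) ≅ Cl(r, s) ⊗_ℝ M₂(ℝ), where Cl(r,s) denotes the Clifford algebra of the quadratic form Q_{r,s} and M₂(ℝ) is the algebra of 2×2 real matrices. -/
/-!
Let `H = ⟨1, -1⟩` be the split plane, with orthogonal basis `e, f`. Its volume element `ω = e f`
squares to `1` and anticommutes with `e` and `f`; a vector `v` orthogonal to `H` anticommutes with
`e` and `f`, hence commutes with `ω`. So `v ↦ v ω` satisfies `(v ω)² = Q v` and commutes with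
`Cl(H)`, and the resulting map `Cl(Q) ⊗ Cl(H) → Cl(Q ⊥ H)` inverts `(v, h) ↦ v ⊗ ω + 1 ⊗ h`,
over any commutative ring. `Cl(H)` is the split quaternion algebra, which is `M₂` once `2` is
invertible, and `Q_{r+1,s+1} ≅ Q_{r,s} ⊥ H` by permuting coordinates.
-/

open scoped TensorProduct

/-- The quadratic form of signature `(r, s)` (`r` pluses, `s` minuses) on `ℝ^(r+s)`. -/
noncomputable def Qform (r s : ℕ) : QuadraticForm ℝ (Fin (r + s) → ℝ) :=
  QuadraticMap.weightedSumSquares ℝ (fun i : Fin (r + s) => if (i : ℕ) < r then (1 : ℝ) else -1)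

open scoped Quaternion
open CliffordAlgebra

theorem add_mul_self_of_anticommute {A : Type*} [Ring A] {a b : A} (h : a * b + b * a = 0) :
    (a + b) * (a + b) = a * a + b * b := by
  rw [add_mul, mul_add, mul_add, ← add_assoc, add_assoc (a * a), h, add_zero]

theorem commute_mul_of_anticommute {A : Type*} [Ring A] {a b c : A}
    (ha : a * c + c * a = 0) (hb : b * c + c * b = 0) : Commute (a * b) c := by
  have ha' : a * -c = c * a := by rw [mul_neg, neg_eq_iff_add_eq_zero, ha]
  have hb' : b * c = -c * b := by rw [neg_mul, eq_neg_iff_add_eq_zero, hb]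
  exact SemiconjBy.mul_left ha' hb'

namespace QuaternionAlgebra

variable (R : Type*) [CommRing R]

def splitMatrixBasis : Basis (Matrix (Fin 2) (Fin 2) R) (1 : R) 0 (-1) where
  i := !![1, 0; 0, -1]
  j := !![0, 1; -1, 0]
  k := !![0, 1; 1, 0]
  i_mul_i := by ext i j; fin_cases i <;> fin_cases j <;> simp
  j_mul_j := by ext i j; fin_cases i <;> fin_cases j <;> simp
  i_mul_j := by ext i j; fin_cases i <;> fin_cases j <;> simp
  j_mul_i := by ext i j; fin_cases i <;> fin_cases j <;> simp

variable {R} in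
theorem splitMatrixBasis_lift (x : ℍ[R,1,0,-1]) :
    (splitMatrixBasis R).lift x =
      !![x.re + x.imI, x.imJ + x.imK; x.imK - x.imJ, x.re - x.imI] := by
  ext i j; fin_cases i <;> fin_cases j <;>
    simp [Basis.lift, splitMatrixBasis, Matrix.algebraMap_matrix_apply] <;> ring

noncomputable def splitEquivMatrix [Invertible (2 : R)] :
    ℍ[R,1,0,-1] ≃ₐ[R] Matrix (Fin 2) (Fin 2) R :=
  AlgEquiv.ofBijective (splitMatrixBasis R).liftHom <| Function.bijective_iff_has_inverse.mpr
    ⟨fun M => ⟨⅟2 * (M 0 0 + M 1 1), ⅟2 * (M 0 0 - M 1 1), ⅟2 * (M 0 1 - M 1 0),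
      ⅟2 * (M 0 1 + M 1 0)⟩,
     fun x => by
      ext <;> simp [splitMatrixBasis_lift] <;> ring_nf <;>
        rw [mul_right_comm, invOf_mul_self, one_mul],
     fun M => by
      ext i j; fin_cases i <;> fin_cases j <;> simp [splitMatrixBasis_lift] <;> ring_nf <;>
        rw [mul_right_comm, invOf_mul_self, one_mul]⟩

end QuaternionAlgebra

namespace CliffordAlgebra

variable {R : Type*} [CommRing R]

theorem commute_of_commute_ι {M₁ M₂ A : Type*} [AddCommGroup M₁] [Module R M₁]
    [AddCommGroup M₂] [Module R M₂] [Ring A] [Algebra R A]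
    {Q₁ : QuadraticForm R M₁} {Q₂ : QuadraticForm R M₂}
    (f : CliffordAlgebra Q₁ →ₐ[R] A) (g : CliffordAlgebra Q₂ →ₐ[R] A)
    (h : ∀ m₁ m₂, Commute (f (ι Q₁ m₁)) (g (ι Q₂ m₂))) (x : CliffordAlgebra Q₁)
    (y : CliffordAlgebra Q₂) : Commute (f x) (g y) := by
  induction x using CliffordAlgebra.induction with
  | algebraMap r => simpa using Algebra.commute_algebraMap_left r (g y)
  | add a b ha hb => simpa using ha.add_left hb
  | mul a b ha hb => simpa using ha.mul_left hb
  | ι m₁ =>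
    induction y using CliffordAlgebra.induction with
    | algebraMap r => simpa using Algebra.commute_algebraMap_right r (f (ι Q₁ m₁))
    | add a b ha hb => simpa using ha.add_right hb
    | mul a b ha hb => simpa using ha.mul_right hb
    | ι m₂ => exact h m₁ m₂

abbrev splitPlane (R : Type*) [CommRing R] : QuadraticForm R (R × R) :=
  CliffordAlgebraQuaternion.Q 1 (-1)

def splitVolume : CliffordAlgebra (splitPlane R) :=
  (CliffordAlgebraQuaternion.quaternionBasis 1 (-1)).k

theorem splitVolume_mul_self :
    splitVolume * splitVolume = (1 : CliffordAlgebra (splitPlane R)) := by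
  rw [splitVolume, QuaternionAlgebra.Basis.k_mul_k]
  simp

theorem splitVolume_mul_ι_add_swap (v : R × R) :
    splitVolume * ι (splitPlane R) v + ι (splitPlane R) v * splitVolume = 0 := by
  apply CliffordAlgebraQuaternion.equiv.injective
  ext <;> simp [splitVolume]

variable {M : Type*} [AddCommGroup M] [Module R M] (Q : QuadraticForm R M)

theorem ι_tmul_splitVolume_add_mul_self (m : M) (v : R × R) :
    (ι Q m ⊗ₜ[R] splitVolume + 1 ⊗ₜ[R] ι (splitPlane R) v) *
      (ι Q m ⊗ₜ[R] splitVolume + 1 ⊗ₜ[R] ι (splitPlane R) v) =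
      algebraMap R _ ((Q.prod (splitPlane R)) (m, v)) := by
  have anticomm : ι Q m ⊗ₜ[R] splitVolume * 1 ⊗ₜ[R] ι (splitPlane R) v +
      1 ⊗ₜ[R] ι (splitPlane R) v * ι Q m ⊗ₜ[R] splitVolume = 0 := by
    rw [Algebra.TensorProduct.tmul_mul_tmul, Algebra.TensorProduct.tmul_mul_tmul, one_mul, mul_one,
      ← TensorProduct.tmul_add, splitVolume_mul_ι_add_swap, TensorProduct.tmul_zero]
  rw [add_mul_self_of_anticommute anticomm, Algebra.TensorProduct.tmul_mul_tmul,
    Algebra.TensorProduct.tmul_mul_tmul, ι_sq_scalar, ι_sq_scalar, splitVolume_mul_self, one_mul,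
    QuadraticMap.prod_apply, map_add, Algebra.TensorProduct.algebraMap_apply,
    Algebra.TensorProduct.algebraMap_apply']

def ofProdSplitPlane : CliffordAlgebra (Q.prod (splitPlane R)) →ₐ[R]
    CliffordAlgebra Q ⊗[R] CliffordAlgebra (splitPlane R) :=
  lift _ ⟨((TensorProduct.mk R _ _).flip splitVolume ∘ₗ ι Q).coprod
      (Algebra.TensorProduct.includeRight.toLinearMap ∘ₗ ι (splitPlane R)),
    fun x => ι_tmul_splitVolume_add_mul_self Q x.1 x.2⟩

@[simp]
theorem ofProdSplitPlane_ι (x : M × (R × R)) :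
    ofProdSplitPlane Q (ι _ x) = ι Q x.1 ⊗ₜ splitVolume + 1 ⊗ₜ ι (splitPlane R) x.2 :=
  lift_ι_apply _ _ _

theorem ofProdSplitPlane_comp_map_inr :
    (ofProdSplitPlane Q).comp (map (QuadraticMap.Isometry.inr Q (splitPlane R))) =
      Algebra.TensorProduct.includeRight :=
  hom_ext <| LinearMap.ext fun v => by simp

local notation "ω'" => map (QuadraticMap.Isometry.inr Q (splitPlane R)) splitVolume

theorem commute_ι_inl_map_inr_splitVolume (m : M) :
    Commute (ι (Q.prod (splitPlane R)) (m, 0)) ω' := by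
  simpa using commute_map_mul_map_of_isOrtho_of_mem_evenOdd_zero_right
    (QuadraticMap.Isometry.inl Q (splitPlane R)) (QuadraticMap.Isometry.inr Q (splitPlane R))
    (fun _ _ => QuadraticMap.IsOrtho.inl_inr _ _) (ι Q m) splitVolume (ι_mem_evenOdd_one Q m)
    (ι_mul_ι_mem_evenOdd_zero _ _ _)

theorem map_inr_splitVolume_mul_self : ω' * ω' = 1 := by
  rw [← map_mul, splitVolume_mul_self, map_one]

theorem map_inr_splitVolume_mul_ι_inr_add_swap (v : R × R) :
    ω' * ι (Q.prod (splitPlane R)) (0, v) + ι (Q.prod (splitPlane R)) (0, v) * ω' = 0 := by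
  simpa using congrArg (map (QuadraticMap.Isometry.inr Q (splitPlane R)))
    (splitVolume_mul_ι_add_swap v)

def toProdSplitPlaneLeft : CliffordAlgebra Q →ₐ[R] CliffordAlgebra (Q.prod (splitPlane R)) :=
  lift Q ⟨LinearMap.mulRight R ω' ∘ₗ ι _ ∘ₗ LinearMap.inl R M (R × R), fun m => by
    dsimp
    rw [(commute_ι_inl_map_inr_splitVolume Q m).symm.mul_mul_mul_comm,
      map_inr_splitVolume_mul_self, mul_one, ι_sq_scalar]
    simp⟩

@[simp]
theorem toProdSplitPlaneLeft_ι (m : M) : toProdSplitPlaneLeft Q (ι Q m) = ι _ (m, 0) * ω' :=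
  lift_ι_apply _ _ _

def toProdSplitPlane : CliffordAlgebra Q ⊗[R] CliffordAlgebra (splitPlane R) →ₐ[R]
    CliffordAlgebra (Q.prod (splitPlane R)) :=
  Algebra.TensorProduct.lift (toProdSplitPlaneLeft Q) (map (QuadraticMap.Isometry.inr Q _)) <|
    commute_of_commute_ι _ _ fun m v => by
      rw [toProdSplitPlaneLeft_ι, map_apply_ι]
      exact commute_mul_of_anticommute
        (ι_mul_ι_add_swap_of_isOrtho (QuadraticMap.IsOrtho.inl_inr m v))
        (map_inr_splitVolume_mul_ι_inr_add_swap Q v)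

theorem toProdSplitPlane_ofProdSplitPlane_ι (x : M × (R × R)) :
    toProdSplitPlane Q (ofProdSplitPlane Q (ι _ x)) = ι _ x := by
  rw [ofProdSplitPlane_ι, map_add, toProdSplitPlane, Algebra.TensorProduct.lift_tmul,
    Algebra.TensorProduct.lift_tmul, map_one, one_mul, toProdSplitPlaneLeft_ι, map_apply_ι,
    mul_assoc, map_inr_splitVolume_mul_self, mul_one, ← map_add]
  simp

def prodSplitPlaneEquiv : CliffordAlgebra (Q.prod (splitPlane R)) ≃ₐ[R]
    CliffordAlgebra Q ⊗[R] CliffordAlgebra (splitPlane R) :=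
  AlgEquiv.ofAlgHom (ofProdSplitPlane Q) (toProdSplitPlane Q)
    (Algebra.TensorProduct.ext
      (hom_ext <| LinearMap.ext fun m => by
        simp [toProdSplitPlane, ← AlgHom.comp_apply (ofProdSplitPlane Q),
          ofProdSplitPlane_comp_map_inr, splitVolume_mul_self])
      (hom_ext <| LinearMap.ext fun v => by simp [toProdSplitPlane]))
    (hom_ext <| LinearMap.ext <| toProdSplitPlane_ofProdSplitPlane_ι Q)

end CliffordAlgebra

def finSumFinTwoEquiv (r s : ℕ) : Fin (r + s) ⊕ Fin 2 ≃ Fin (r + 1 + (s + 1)) :=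
  (Equiv.sumCongr (finSumFinEquiv.symm : Fin (r + s) ≃ Fin r ⊕ Fin s)
      (finSumFinEquiv (m := 1) (n := 1)).symm).trans <|
    (Equiv.sumSumSumComm _ _ _ _).trans <|
      (Equiv.sumCongr finSumFinEquiv finSumFinEquiv).trans finSumFinEquiv

theorem sign_finSumFinTwoEquiv (r s : ℕ) (j : Fin (r + s) ⊕ Fin 2) :
    (if (finSumFinTwoEquiv r s j : ℕ) < r + 1 then (1 : ℝ) else -1) =
      Sum.elim (fun i : Fin (r + s) => if (i : ℕ) < r then 1 else -1) ![1, -1] j := by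
  rcases j with i | k
  · induction i using Fin.addCases with
    | left i => simp [finSumFinTwoEquiv]
    | right i => simp [finSumFinTwoEquiv]; omega
  · have h0 : (finSumFinEquiv (m := 1) (n := 1)).symm 0 = .inl 0 := rfl
    have h1 : (finSumFinEquiv (m := 1) (n := 1)).symm 1 = .inr 0 := rfl
    fin_cases k
    · simp [finSumFinTwoEquiv, h0]
    · simp [finSumFinTwoEquiv, h1]; omega

noncomputable def Qform_succ_succ_isometryEquiv (r s : ℕ) :
    (Qform (r + 1) (s + 1)).IsometryEquiv ((Qform r s).prod (splitPlane ℝ)) where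
  toLinearEquiv := LinearEquiv.funCongrLeft ℝ ℝ (finSumFinTwoEquiv r s) ≪≫ₗ
    LinearEquiv.sumArrowLequivProdArrow _ _ ℝ ℝ ≪≫ₗ
    (LinearEquiv.refl ℝ _).prodCongr (LinearEquiv.finTwoArrow ℝ ℝ)
  map_app' x := by
    conv_rhs => rw [Qform, QuadraticMap.weightedSumSquares_apply,
      ← (finSumFinTwoEquiv r s).sum_comp]
    simp only [sign_finSumFinTwoEquiv, Fintype.sum_sum_type, Fin.sum_univ_two]
    simp [QuadraticMap.prod_apply, QuadraticMap.weightedSumSquares_apply, Qform]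

/-- `Cl(r+1, s+1) ≅ Cl(r, s) ⊗ M₂(ℝ)` as `ℝ`-algebras. -/
theorem cl_succ_succ_iso_tensor_matrix (r s : ℕ) :
    Nonempty (CliffordAlgebra (Qform (r + 1) (s + 1)) ≃ₐ[ℝ]
      (CliffordAlgebra (Qform r s) ⊗[ℝ] Matrix (Fin 2) (Fin 2) ℝ)) :=
  ⟨(equivOfIsometry (Qform_succ_succ_isometryEquiv r s)).trans <|
    (prodSplitPlaneEquiv (Qform r s)).trans <|
      Algebra.TensorProduct.congr AlgEquiv.refl <|
        CliffordAlgebraQuaternion.equiv.trans (QuaternionAlgebra.splitEquivMatrix ℝ)⟩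
end

section
/- The creation and annihilation operators are self-adjoint with respect to the polyform inner product: for all ψ₁, ψ₂ ∈ S = ⋀ℂⁿ and all 1 ≤ i ≤ n, ⟨a_i ψ₁, ψ₂⟩ = ⟨ψ₁, a_i ψ₂⟩ and ⟨a_i† ψ₁, ψ₂⟩ = ⟨ψ₁, a_i† ψ₂⟩. -/
/-- The space of polyforms (spinors): the exterior algebra of `ℂⁿ`. -/
noncomputable abbrev Polyform (n : ℕ) := ExteriorAlgebra ℂ (Fin n → ℂ)

/-- The creation operator `a_i`: wedging with the basis one-form `e_i`. -/
noncomputable def crea (n : ℕ) (i : Fin n) : Module.End ℂ (Polyform n) :=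
  LinearMap.mulLeft ℂ (ExteriorAlgebra.ι ℂ (Pi.single i 1))

/-- The annihilation operator `a_i†`: interior product (left contraction) with the
`i`-th dual basis vector. -/
noncomputable def anni (n : ℕ) (i : Fin n) : Module.End ℂ (Polyform n) :=
  CliffordAlgebra.contractLeft (Q := (0 : QuadraticForm ℂ (Fin n → ℂ))) (LinearMap.proj i)

/-- The linear functional extracting the coefficient of the top form `e₁ ∧ ⋯ ∧ e_n`
of a polyform. -/
noncomputable def topCoeff (n : ℕ) : Polyform n →ₗ[ℂ] ℂ :=
  ExteriorAlgebra.liftAlternating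
    (fun k => if h : k = n
      then AlternatingMap.domDomCongr (finCongr h.symm) (Pi.basisFun ℂ (Fin n)).det
      else 0)

/-- The polyform inner product `⟨ψ₁, ψ₂⟩`: the coefficient of the top form in
`σ(ψ₁) ∧ ψ₂`, where `σ` is the reversal anti-automorphism. -/
noncomputable def polyIP (n : ℕ) (ψ₁ ψ₂ : Polyform n) : ℂ :=
  topCoeff n (CliffordAlgebra.reverse (Q := (0 : QuadraticForm ℂ (Fin n → ℂ))) ψ₁ * ψ₂)

/-!
Creation is self-adjoint because reversal turns `e_i ∧ ψ₁` into `σ(ψ₁) ∧ e_i`. For annihilation,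
reversal turns the left contraction `ι_i ⌋ ψ₁` into the right contraction `σ(ψ₁) ⌊ ι_i`, and by the
anti-derivation rules of the two contractions (induction on `x`), `(x ⌊ ι_i) ∧ y` and
`x ∧ (ι_i ⌋ y)` differ by a left contraction. A left contraction has no top-degree component: it
lowers degrees by one, and `⋀^(n+1) ℂⁿ = 0`.
-/

namespace CliffordAlgebra

variable {R M N : Type*} [CommRing R] [AddCommGroup M] [Module R M] [AddCommGroup N] [Module R N]
  {Q : QuadraticForm R M}

theorem reverse_contractLeft (d : Module.Dual R M) (x : CliffordAlgebra Q) :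
    reverse (contractLeft d x) = contractRight (reverse x) d := by
  rw [contractRight_eq, reverse_reverse]

theorem contractLeft_eq_zero_of_mem_pow_zero (d : Module.Dual R M) {z : CliffordAlgebra Q}
    (hz : z ∈ LinearMap.range (ι Q) ^ 0) : contractLeft d z = 0 := by
  rw [pow_zero] at hz
  obtain ⟨r, rfl⟩ := Submodule.mem_one.mp hz
  exact contractLeft_algebraMap Q d r

theorem contractLeft_mem_pow_pred (d : Module.Dual R M) {k : ℕ} {z : CliffordAlgebra Q}
    (hz : z ∈ LinearMap.range (ι Q) ^ k) : contractLeft d z ∈ LinearMap.range (ι Q) ^ (k - 1) := by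
  induction hz using Submodule.pow_induction_on_left' with
  | algebraMap r =>
    rw [contractLeft_algebraMap]
    exact Submodule.zero_mem _
  | add x y i _ _ hx hy =>
    rw [map_add]
    exact Submodule.add_mem _ hx hy
  | mem_mul m hm i x hx ih =>
    obtain ⟨v, rfl⟩ := hm
    rw [contractLeft_ι_mul, Nat.succ_sub_one]
    refine Submodule.sub_mem _ (Submodule.smul_mem _ _ hx) ?_
    cases i with
    | zero =>
      rw [contractLeft_eq_zero_of_mem_pow_zero d hx, mul_zero]
      exact Submodule.zero_mem _
    | succ j =>
      rw [pow_succ']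
      exact Submodule.mul_mem_mul (LinearMap.mem_range_self _ v) ih

theorem map_contractRight_mul_eq_map_mul_contractLeft (φ : CliffordAlgebra Q →ₗ[R] N)
    (d : Module.Dual R M) (hφ : ∀ z, φ (contractLeft d z) = 0) (x y : CliffordAlgebra Q) :
    φ (contractRight x d * y) = φ (x * contractLeft d y) := by
  induction x using CliffordAlgebra.right_induction generalizing y with
  | algebraMap r =>
    rw [contractRight_algebraMap, zero_mul, map_zero, ← Algebra.smul_def, map_smul, hφ, smul_zero]
  | add x x' hx hx' =>
    rw [map_add, LinearMap.add_apply, add_mul, map_add, hx, hx', add_mul, map_add]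
  | mul_ι m x ih =>
    rw [contractRight_mul_ι, sub_mul, map_sub, smul_mul_assoc, map_smul, mul_assoc,
      ih (ι Q m * y), contractLeft_ι_mul, mul_sub, map_sub, mul_smul_comm, map_smul,
      ← mul_assoc, sub_sub_cancel]

end CliffordAlgebra

namespace ExteriorAlgebra

theorem liftAlternating_eq_zero_of_mem_exteriorPower {R M N : Type*} [CommRing R] [AddCommGroup M]
    [Module R M] [AddCommGroup N] [Module R N] {G : ∀ i, M [⋀^Fin i]→ₗ[R] N} {k : ℕ}
    (hG : G k = 0) {z : ExteriorAlgebra R M} (hz : z ∈ ⋀[R]^k M) : liftAlternating G z = 0 := by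
  rw [← ιMulti_span_fixedDegree] at hz
  induction hz using Submodule.span_induction with
  | mem _ hz =>
    obtain ⟨v, rfl⟩ := hz
    rw [liftAlternating_apply_ιMulti, hG, AlternatingMap.zero_apply]
  | zero => exact map_zero _
  | add _ _ _ _ hx hy => rw [map_add, hx, hy, add_zero]
  | smul _ _ _ h => rw [map_smul, h, smul_zero]

variable {K V N : Type*} [Field K] [AddCommGroup V] [Module K V] [FiniteDimensional K V]
  [AddCommGroup N] [Module K N]

theorem exteriorPower_eq_bot_of_finrank_lt {k : ℕ} (hk : Module.finrank K V < k) :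
    ⋀[K]^k V = ⊥ := by
  rw [← ιMulti_span_fixedDegree, Submodule.span_eq_bot]
  rintro _ ⟨v, rfl⟩
  refine (ιMulti K k).map_linearDependent v fun hv => ?_
  have := hv.fintype_card_le_finrank
  rw [Fintype.card_fin] at this
  omega

theorem liftAlternating_contractLeft_eq_zero {G : ∀ i, V [⋀^Fin i]→ₗ[K] N}
    (hG : ∀ k < Module.finrank K V, G k = 0) (d : Module.Dual K V) (z : ExteriorAlgebra K V) :
    liftAlternating G (CliffordAlgebra.contractLeft d z) = 0 := by
  suffices h : ⨆ i, ⋀[K]^i V ≤ LinearMap.ker (liftAlternating G ∘ₗ CliffordAlgebra.contractLeft d)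
    from h ((CliffordAlgebra.iSup_ι_range_eq_top (Q := 0)).ge Submodule.mem_top)
  refine iSup_le fun i z hz => ?_
  rw [LinearMap.mem_ker, LinearMap.comp_apply]
  rcases i with _ | k
  · rw [CliffordAlgebra.contractLeft_eq_zero_of_mem_pow_zero d hz, map_zero]
  rcases lt_or_ge k (Module.finrank K V) with hk | hk
  · exact liftAlternating_eq_zero_of_mem_exteriorPower (hG k hk)
      (CliffordAlgebra.contractLeft_mem_pow_pred d hz)
  · rw [exteriorPower_eq_bot_of_finrank_lt (by omega), Submodule.mem_bot] at hz
    rw [hz, map_zero, map_zero]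

end ExteriorAlgebra

theorem topCoeff_contractLeft {n : ℕ} (d : Module.Dual ℂ (Fin n → ℂ)) (z : Polyform n) :
    topCoeff n (CliffordAlgebra.contractLeft d z) = 0 :=
  ExteriorAlgebra.liftAlternating_contractLeft_eq_zero
    (fun k hk => dif_neg (by rw [Module.finrank_fin_fun] at hk; omega)) d z

theorem crea_anni_selfAdjoint_general (n : ℕ) (i : Fin n) (ψ₁ ψ₂ : Polyform n) :
    polyIP n (crea n i ψ₁) ψ₂ = polyIP n ψ₁ (crea n i ψ₂) ∧
    polyIP n (anni n i ψ₁) ψ₂ = polyIP n ψ₁ (anni n i ψ₂) := by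
  constructor
  · simp only [polyIP, crea, LinearMap.mulLeft_apply, CliffordAlgebra.reverse.map_mul,
      CliffordAlgebra.reverse_ι, mul_assoc]
  · rw [polyIP, anni, CliffordAlgebra.reverse_contractLeft]
    exact CliffordAlgebra.map_contractRight_mul_eq_map_mul_contractLeft _ _
      (topCoeff_contractLeft _) _ _

/-- Creation and annihilation operators are self-adjoint for the polyform inner product. -/
theorem crea_anni_selfAdjoint (n : ℕ) (hn : 1 ≤ n) (i : Fin n) (ψ₁ ψ₂ : Polyform n) :
    polyIP n (crea n i ψ₁) ψ₂ = polyIP n ψ₁ (crea n i ψ₂) ∧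
    polyIP n (anni n i ψ₁) ψ₂ = polyIP n ψ₁ (anni n i ψ₂) :=
  crea_anni_selfAdjoint_general n i ψ₁ ψ₂
end

section
/- In the polyform model of Cl(2n) on S = ⋀ℂⁿ, the antilinear operators R := Γ₁ ∘ … ∘ Γ_n ∘ ∗ and R' := Γ_{n+1} ∘ … ∘ Γ_{2n} ∘ ∗ satisfy R ∘ Γ_A = (−1)^{n−1} Γ_A ∘ R and R' ∘ Γ_A = (−1)^{n} Γ_A ∘ R' for all A ∈ {1, …, 2n}. -/
/-- The gamma operators: `Γ_i = a_i + a_i†` and `Γ_{i+n} = I•(a_i − a_i†)` (0-indexed). -/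
noncomputable def Gam (n : ℕ) (A : Fin (2 * n)) : Module.End ℂ (Polyform n) :=
  if h : (A : ℕ) < n then crea n ⟨A, h⟩ + anni n ⟨A, h⟩
  else Complex.I • (crea n ⟨(A : ℕ) - n, by have := A.isLt; omega⟩
    - anni n ⟨(A : ℕ) - n, by have := A.isLt; omega⟩)

/-- The basis polyform `e_{i₁} ∧ ⋯ ∧ e_{i_k}` indexed by a list of indices. -/
noncomputable def basisMonomial (n : ℕ) (l : List (Fin n)) : Polyform n :=
  (l.map fun i => ExteriorAlgebra.ι ℂ (Pi.single i (1 : ℂ))).prod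

/-- `st` is the complex conjugation `∗` on polyforms: the `ℂ`-antilinear involution fixing
each basis polyform and conjugating the complex coefficients. -/
def IsConjugation (n : ℕ) (st : Polyform n → Polyform n) : Prop :=
  (∀ x y, st (x + y) = st x + st y) ∧
  (∀ (z : ℂ) (x : Polyform n), st (z • x) = (starRingEnd ℂ) z • st x) ∧
  (∀ l : List (Fin n), st (basisMonomial n l) = basisMonomial n l)

/-- The antilinear operator `R := Γ₁ ∘ ⋯ ∘ Γ_n ∘ ∗`. -/
noncomputable def Rop (n : ℕ) (st : Polyform n → Polyform n) : Polyform n → Polyform n :=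
  fun ψ => (((List.finRange n).map fun i => Gam n (Fin.castLE (by omega) i)).prod) (st ψ)

/-- The antilinear operator `R' := Γ_{n+1} ∘ ⋯ ∘ Γ_{2n} ∘ ∗`. -/
noncomputable def Rop' (n : ℕ) (st : Polyform n → Polyform n) : Polyform n → Polyform n :=
  fun ψ =>
    (((List.finRange n).map fun i => Gam n ⟨n + i.1, by have := i.2; omega⟩).prod) (st ψ)

/-!
The CAR relations make distinct `Γ`'s anticommute. The conjugation `∗` commutes with every
`a_i` and `a_i†`, since these map basis polyforms to real combinations of basis polyforms;
as `∗` conjugates `i`, this gives `∗ Γ_A = ± Γ_A ∗` with the sign `−1` exactly for `A > n`.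
Moving `Γ_A` through a product of `n` distinct gammas costs one sign per factor other than
`Γ_A`: `n − 1` signs when `Γ_A` occurs in it, `n` otherwise.
-/

open ExteriorAlgebra

lemma crea_anticomm (n : ℕ) (i j : Fin n) : crea n i * crea n j + crea n j * crea n i = 0 := by
  refine LinearMap.ext fun x => ?_
  have h := ι_add_mul_swap (R := ℂ) (Pi.single i (1 : ℂ) : Fin n → ℂ) (Pi.single j 1)
  simp [crea, ← mul_assoc, ← add_mul, h]

lemma anni_anticomm (n : ℕ) (i j : Fin n) : anni n i * anni n j + anni n j * anni n i = 0 := by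
  refine LinearMap.ext fun x => ?_
  simp only [LinearMap.add_apply, Module.End.mul_apply, anni, LinearMap.zero_apply]
  rw [CliffordAlgebra.contractLeft_comm, neg_add_cancel]

lemma anni_crea_anticomm (n : ℕ) (i j : Fin n) :
    anni n i * crea n j + crea n j * anni n i = if i = j then 1 else 0 := by
  refine LinearMap.ext fun x => ?_
  simp only [anni, crea, LinearMap.add_apply, Module.End.mul_apply, LinearMap.mulLeft_apply,
    CliffordAlgebra.contractLeft_ι_mul, sub_add_cancel]
  by_cases h : i = j <;> simp [h]

lemma smul_crea_add_smul_anni_anticomm (n : ℕ) (i j : Fin n) (p q r s : ℂ) :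
    (p • crea n i + q • anni n i) * (r • crea n j + s • anni n j)
      + (r • crea n j + s • anni n j) * (p • crea n i + q • anni n i)
      = if i = j then (p * s + q * r) • 1 else 0 := by
  calc _ = (p * r) • (crea n i * crea n j + crea n j * crea n i)
        + (q * s) • (anni n i * anni n j + anni n j * anni n i)
        + (q * r) • (anni n i * crea n j + crea n j * anni n i)
        + (p * s) • (anni n j * crea n i + crea n i * anni n j) := by
          simp only [add_mul, mul_add, smul_mul_assoc, mul_smul_comm, smul_add, smul_smul]
          module
    _ = _ := by
      rw [crea_anticomm, anni_anticomm, anni_crea_anticomm, anni_crea_anticomm]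
      by_cases h : i = j
      · subst h; simp [add_smul, add_comm]
      · simp [h, Ne.symm h]

lemma Gam_mul_Gam_add (n : ℕ) (A B : Fin (2 * n)) :
    Gam n A * Gam n B + Gam n B * Gam n A = if A = B then 2 else 0 := by
  have hre (i : Fin n) : crea n i + anni n i = (1 : ℂ) • crea n i + (1 : ℂ) • anni n i := by
    module
  have him (i : Fin n) : Complex.I • (crea n i - anni n i)
      = Complex.I • crea n i + (-Complex.I) • anni n i := by
    module
  unfold Gam
  split_ifs <;>
    simp only [hre, him, smul_crea_add_smul_anni_anticomm, Fin.ext_iff] <;>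
    split_ifs <;> first | omega | norm_num [two_smul]

/-- `L.length + L.count a` has the parity of the number of entries of `L` other than `a`. -/
lemma prod_map_mul_of_anticomm {ι R : Type*} [DecidableEq ι] [Ring R] (f : ι → R)
    (hf : ∀ i j, i ≠ j → f i * f j = -(f j * f i)) (L : List ι) (a : ι) :
    (L.map f).prod * f a = ((-1 : ℤ) ^ (L.length + L.count a)) • (f a * (L.map f).prod) := by
  induction L with
  | nil => simp
  | cons b L ih =>
    rw [List.map_cons, List.prod_cons, mul_assoc, ih, mul_smul_comm, ← mul_assoc]
    by_cases hb : b = a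
    · subst hb
      simp [pow_add, mul_assoc]
    · rw [hf b a hb]
      simp [hb, add_right_comm L.length 1, pow_succ, mul_assoc]

lemma Gam_anticomm (n : ℕ) (A B : Fin (2 * n)) (h : A ≠ B) :
    Gam n A * Gam n B = -(Gam n B * Gam n A) := by
  rw [eq_neg_iff_add_eq_zero, Gam_mul_Gam_add, if_neg h]

lemma basisMonomial_cons (n : ℕ) (i : Fin n) (l : List (Fin n)) :
    basisMonomial n (i :: l) = ι ℂ (Pi.single i 1) * basisMonomial n l := by
  simp [basisMonomial]

lemma crea_basisMonomial (n : ℕ) (i : Fin n) (l : List (Fin n)) :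
    crea n i (basisMonomial n l) = basisMonomial n (i :: l) := by
  rw [basisMonomial_cons]; rfl

lemma anni_basisMonomial_nil (n : ℕ) (i : Fin n) : anni n i (basisMonomial n []) = 0 := by
  simp [anni, basisMonomial]

lemma anni_basisMonomial_cons (n : ℕ) (i j : Fin n) (l : List (Fin n)) :
    anni n i (basisMonomial n (j :: l))
      = (if i = j then 1 else 0 : ℂ) • basisMonomial n l
        - crea n j (anni n i (basisMonomial n l)) := by
  simp [anni, crea, basisMonomial_cons, CliffordAlgebra.contractLeft_ι_mul, Pi.single_apply]

lemma span_basisMonomial (n : ℕ) : Submodule.span ℂ (Set.range (basisMonomial n)) = ⊤ := by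
  rw [eq_top_iff]
  rintro x -
  induction x using ExteriorAlgebra.induction with
  | algebraMap r =>
    rw [Algebra.algebraMap_eq_smul_one]
    exact Submodule.smul_mem _ r (Submodule.subset_span ⟨[], rfl⟩)
  | ι v =>
    have hv : v ∈ Submodule.span ℂ (Set.range (Pi.basisFun ℂ (Fin n))) := by
      rw [Module.Basis.span_eq]; trivial
    have := Submodule.mem_map_of_mem (f := ι ℂ) hv
    rw [Submodule.map_span] at this
    refine Submodule.span_mono ?_ this
    rintro _ ⟨_, ⟨i, rfl⟩, rfl⟩
    exact ⟨[i], by simp [basisMonomial]⟩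
  | mul a b ha hb =>
    have hab := Submodule.mul_mem_mul ha hb
    rw [Submodule.span_mul_span] at hab
    refine Submodule.span_le.2 ?_ hab
    rintro _ ⟨_, ⟨l, rfl⟩, _, ⟨l', rfl⟩, rfl⟩
    exact Submodule.subset_span ⟨l ++ l', by simp [basisMonomial]⟩
  | add a b ha hb => exact Submodule.add_mem _ ha hb

namespace IsConjugation

variable {n : ℕ} {st : Polyform n → Polyform n}

def toStarLinearMap (hst : IsConjugation n st) : Polyform n →ₗ⋆[ℂ] Polyform n where
  toFun := st
  map_add' := hst.1
  map_smul' := hst.2.1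

lemma map_zero (hst : IsConjugation n st) : st 0 = 0 :=
  hst.toStarLinearMap.map_zero

lemma map_sub (hst : IsConjugation n st) (x y : Polyform n) : st (x - y) = st x - st y :=
  hst.toStarLinearMap.map_sub x y

lemma comm_of_map_basisMonomial_fixed (hst : IsConjugation n st) (f : Module.End ℂ (Polyform n))
    (hf : ∀ l, st (f (basisMonomial n l)) = f (basisMonomial n l)) (x : Polyform n) :
    st (f x) = f (st x) := by
  have h : hst.toStarLinearMap.comp f = f.comp hst.toStarLinearMap :=
    LinearMap.ext_on_range (span_basisMonomial n) fun l => by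
      simp [toStarLinearMap, hf, hst.2.2]
  exact LinearMap.congr_fun h x

lemma apply_crea (hst : IsConjugation n st) (i : Fin n) (x : Polyform n) :
    st (crea n i x) = crea n i (st x) :=
  hst.comm_of_map_basisMonomial_fixed _ (fun l => by rw [crea_basisMonomial, hst.2.2]) x

lemma apply_anni (hst : IsConjugation n st) (i : Fin n) (x : Polyform n) :
    st (anni n i x) = anni n i (st x) := by
  refine hst.comm_of_map_basisMonomial_fixed _ (fun l => ?_) x
  induction l with
  | nil => rw [anni_basisMonomial_nil, hst.map_zero]
  | cons j l ih =>
    rw [anni_basisMonomial_cons, hst.map_sub, hst.2.1, hst.2.2, hst.apply_crea, ih]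
    split_ifs <;> simp

lemma apply_Gam (hst : IsConjugation n st) (A : Fin (2 * n)) (x : Polyform n) :
    st (Gam n A x) = (if (A : ℕ) < n then 1 else -1 : ℂ) • Gam n A (st x) := by
  unfold Gam
  split_ifs
  · simp [hst.1, hst.apply_crea, hst.apply_anni]
  · simp [hst.2.1, hst.map_sub, hst.apply_crea, hst.apply_anni, smul_sub]

lemma prod_map_Gam_apply_Gam (hst : IsConjugation n st) (L : List (Fin (2 * n)))
    (A : Fin (2 * n)) (ψ : Polyform n) :
    (L.map (Gam n)).prod (st (Gam n A ψ))
      = ((if (A : ℕ) < n then 1 else -1 : ℂ) * (-1) ^ (L.length + L.count A))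
        • Gam n A ((L.map (Gam n)).prod (st ψ)) := by
  rw [hst.apply_Gam, map_smul, ← Module.End.mul_apply,
    prod_map_mul_of_anticomm _ (Gam_anticomm n) L A, mul_smul]
  norm_cast

end IsConjugation

lemma count_map_castLE_finRange (n : ℕ) (h : n ≤ 2 * n) (A : Fin (2 * n)) :
    ((List.finRange n).map (Fin.castLE h)).count A = if (A : ℕ) < n then 1 else 0 := by
  have hnd := (List.nodup_finRange n).map (Fin.castLE_injective h)
  split_ifs with hA
  · exact List.count_eq_one_of_mem hnd (List.mem_map.2 ⟨⟨A, hA⟩, List.mem_finRange _, rfl⟩)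
  · exact List.count_eq_zero_of_not_mem (by
      simp only [List.mem_map, List.mem_finRange, Fin.ext_iff, Fin.val_castLE, true_and,
        not_exists]
      omega)

lemma count_map_natAdd_finRange (n : ℕ) (A : Fin (2 * n)) :
    ((List.finRange n).map fun i : Fin n => (⟨n + i.1, by omega⟩ : Fin (2 * n))).count A
      = if (A : ℕ) < n then 0 else 1 := by
  have hnd := (List.nodup_finRange n).map
    (f := fun i : Fin n => (⟨n + i.1, by omega⟩ : Fin (2 * n))) fun i j h => by
      simpa [Fin.ext_iff] using h
  split_ifs with hA
  · exact List.count_eq_zero_of_not_mem (by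
      simp only [List.mem_map, List.mem_finRange, Fin.ext_iff, true_and, not_exists]
      omega)
  · exact List.count_eq_one_of_mem hnd
      (List.mem_map.2 ⟨⟨A - n, by omega⟩, List.mem_finRange _, by ext; dsimp only; omega⟩)

theorem Rop_Rop'_commutation_general (n : ℕ) (st : Polyform n → Polyform n)
    (hst : IsConjugation n st) (A : Fin (2 * n)) (ψ : Polyform n) :
    Rop n st (Gam n A ψ) = ((-1 : ℂ) ^ (n - 1)) • Gam n A (Rop n st ψ) ∧
    Rop' n st (Gam n A ψ) = ((-1 : ℂ) ^ n) • Gam n A (Rop' n st ψ) := by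
  have hsign : (-1 : ℂ) ^ n = -(-1) ^ (n - 1) := by
    obtain ⟨m, rfl⟩ : ∃ m, n = m + 1 := ⟨n - 1, by have := A.isLt; omega⟩
    simp [pow_succ]
  have hR (φ : Polyform n) : Rop n st φ
      = (((List.finRange n).map (Fin.castLE (by omega))).map (Gam n)).prod (st φ) := by
    rw [List.map_map]; rfl
  have hR' (φ : Polyform n) : Rop' n st φ
      = (((List.finRange n).map fun i : Fin n => (⟨n + i.1, by omega⟩ : Fin (2 * n))).map
          (Gam n)).prod (st φ) := by
    rw [List.map_map]; rfl
  rw [hR, hR, hR', hR', hst.prod_map_Gam_apply_Gam, hst.prod_map_Gam_apply_Gam,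
    count_map_castLE_finRange, count_map_natAdd_finRange]
  split_ifs <;> simp [pow_succ, hsign]

/-- `R ∘ Γ_A = (−1)^{n−1} Γ_A ∘ R` and `R' ∘ Γ_A = (−1)^n Γ_A ∘ R'` for all `A`. -/
theorem Rop_Rop'_commutation (n : ℕ) (hn : 1 ≤ n) (st : Polyform n → Polyform n)
    (hst : IsConjugation n st) (A : Fin (2 * n)) (ψ : Polyform n) :
    Rop n st (Gam n A ψ) = ((-1 : ℂ) ^ (n - 1)) • Gam n A (Rop n st ψ) ∧
    Rop' n st (Gam n A ψ) = ((-1 : ℂ) ^ n) • Gam n A (Rop' n st ψ) :=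
  Rop_Rop'_commutation_general n st hst A ψ
end

section
/- Suppose V = V₁ ⊕ V₂ is a g-orthogonal direct sum decomposition of a finite-dimensional real vector space with nondegenerate symmetric bilinear form g, J : V₁ → V₁ is a linear map with J² = −id and g(JX, JY) = g(X, Y) for all X, Y ∈ V₁, and I : V₂ → V₂ is a linear map with I² = id and g(IX, IY) = −g(X, Y) for all X, Y ∈ V₂. Extend I and J to linear maps on V by zero on the complementary summand, and let K : V_ℂ → V_ℂ be the ℂ-linear extension of I plus i times the ℂ-linear extension of J. Then K is a mixed structure on (V, g): K² = id, K ∘ K̄ = K̄ ∘ K, and g(KX, KY) = g(K̄X, K̄Y) = −g(X, Y) for all X, Y ∈ V_ℂ. -/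
open scoped TensorProduct

/-- The standard conjugation `σ` on the complexification `ℂ ⊗[ℝ] V`: the `ℂ`-antilinear
(`ℝ`-linear) involution whose fixed points are the real vectors. -/
noncomputable def conjC (V : Type*) [AddCommGroup V] [Module ℝ V] :
    (ℂ ⊗[ℝ] V) →ₗ[ℝ] (ℂ ⊗[ℝ] V) :=
  TensorProduct.map Complex.conjAe.toLinearMap LinearMap.id

/-- The canonical inclusion of `V` into its complexification `ℂ ⊗[ℝ] V`, `v ↦ 1 ⊗ v`. -/
noncomputable def inclC (V : Type*) [AddCommGroup V] [Module ℝ V] :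
    V →ₗ[ℝ] (ℂ ⊗[ℝ] V) :=
  TensorProduct.mk ℝ ℂ V 1

/-- The conjugate `K̄ = σ ∘ K ∘ σ` of a `ℂ`-linear map on the complexification. -/
noncomputable def conjMap {V : Type*} [AddCommGroup V] [Module ℝ V]
    (K : (ℂ ⊗[ℝ] V) →ₗ[ℂ] (ℂ ⊗[ℝ] V)) : (ℂ ⊗[ℝ] V) → (ℂ ⊗[ℝ] V) :=
  fun x => conjC V (K (conjC V x))

/-- A mixed structure on `(V, g)`: a `ℂ`-linear map `K` on `V_ℂ = ℂ ⊗[ℝ] V` with `K² = id`,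
`K K̄ = K̄ K`, and `g(KX, KY) = g(K̄X, K̄Y) = −g(X, Y)` for the `ℂ`-bilinear extension of
`g`. -/
def IsMixedStructure (V : Type*) [AddCommGroup V] [Module ℝ V]
    (g : LinearMap.BilinForm ℝ V) (K : (ℂ ⊗[ℝ] V) →ₗ[ℂ] (ℂ ⊗[ℝ] V)) : Prop :=
  (∀ x, K (K x) = x) ∧
  (∀ x, K (conjMap K x) = conjMap K (K x)) ∧
  (∀ x y, (LinearMap.BilinForm.baseChange ℂ g) (K x) (K y)
    = -(LinearMap.BilinForm.baseChange ℂ g) x y) ∧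
  (∀ x y, (LinearMap.BilinForm.baseChange ℂ g) (conjMap K x) (conjMap K y)
    = -(LinearMap.BilinForm.baseChange ℂ g) x y)

/-!
Write `K = Aℂ + i Bℂ` with `A = I` and `B = J` real. Since `σ` commutes with base-changed real
maps and conjugates scalars, `K̄ = Aℂ - i Bℂ`. Then `K² = A² - B² + i (AB + BA)` and
`K K̄ = A² + B² + i (BA - AB)`, `K̄ K = A² + B² + i (AB - BA)`, and similarly for `g(K·, K·)` and
`g(K̄·, K̄·)`; so everything follows from the real identities `AB = BA = 0`, `A² = 1 + B²`,
`g(A·, B·) = g(B·, A·) = 0` and `g(A·, A·) - g(B·, B·) = -g`. Each of these is checked on the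
summands `V₁` and `V₂` separately, using `g(V₁, V₂) = g(V₂, V₁) = 0`.
-/

section BaseChange

variable {R A M : Type*} [CommRing R] [CommRing A] [Algebra R A] [AddCommGroup M] [Module R M]

namespace LinearMap.BilinForm

theorem baseChange_compl₁₂ (g : LinearMap.BilinForm R M) (f f' : M →ₗ[R] M) :
    LinearMap.BilinForm.baseChange A (g.compl₁₂ f f') =
      (g.baseChange A).compl₁₂ (f.baseChange A) (f'.baseChange A) := by
  ext
  simp

theorem baseChange_sub (g h : LinearMap.BilinForm R M) :
    LinearMap.BilinForm.baseChange A (g - h) = g.baseChange A - h.baseChange A := by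
  ext
  simp [sub_smul]

theorem baseChange_neg (g : LinearMap.BilinForm R M) :
    LinearMap.BilinForm.baseChange A (-g) = -g.baseChange A := by
  ext
  simp

end LinearMap.BilinForm

end BaseChange

section Conjugation

variable {V : Type*} [AddCommGroup V] [Module ℝ V]

@[simp]
theorem conjC_tmul (a : ℂ) (v : V) : conjC V (a ⊗ₜ v) = (starRingEnd ℂ a) ⊗ₜ v := rfl

@[simp]
theorem conjC_conjC (x : ℂ ⊗[ℝ] V) : conjC V (conjC V x) = x := by
  induction x using TensorProduct.induction_on with
  | zero => simp
  | tmul a v => simp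
  | add x y hx hy => simp [hx, hy]

theorem conjC_smul (c : ℂ) (x : ℂ ⊗[ℝ] V) :
    conjC V (c • x) = starRingEnd ℂ c • conjC V x := by
  induction x using TensorProduct.induction_on with
  | zero => simp
  | tmul a v => simp [TensorProduct.smul_tmul']
  | add x y hx hy => simp [hx, hy]

theorem conjC_baseChange (f : V →ₗ[ℝ] V) (x : ℂ ⊗[ℝ] V) :
    conjC V (f.baseChange ℂ x) = f.baseChange ℂ (conjC V x) := by
  induction x using TensorProduct.induction_on with
  | zero => simp
  | tmul a v => simp
  | add x y hx hy => simp [hx, hy]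

theorem conjMap_baseChange_add_I_smul (f h : V →ₗ[ℝ] V) (x : ℂ ⊗[ℝ] V) :
    conjMap (f.baseChange ℂ + Complex.I • h.baseChange ℂ) x =
      f.baseChange ℂ x - Complex.I • h.baseChange ℂ x := by
  simp [conjMap, conjC_smul, conjC_baseChange, sub_eq_add_neg]

end Conjugation

section Complexification

variable {V : Type*} [AddCommGroup V] [Module ℝ V]

theorem isMixedStructure_baseChange_add_I_smul (g : LinearMap.BilinForm ℝ V)
    {A B : Module.End ℝ V} (hAB : A * B = 0) (hBA : B * A = 0) (hAA : A * A = 1 + B * B)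
    (hgAB : g.compl₁₂ A B = 0) (hgBA : g.compl₁₂ B A = 0)
    (hgAA : g.compl₁₂ A A - g.compl₁₂ B B = -g) :
    IsMixedStructure V g (A.baseChange ℂ + Complex.I • B.baseChange ℂ) := by
  simp only [IsMixedStructure, conjMap_baseChange_add_I_smul]
  set Aℂ := A.baseChange ℂ
  set Bℂ := B.baseChange ℂ
  set gℂ := g.baseChange ℂ
  have hAB' (x) : Aℂ (Bℂ x) = 0 := by
    rw [← Module.End.mul_apply, ← LinearMap.baseChange_mul, hAB, LinearMap.baseChange_zero,
      LinearMap.zero_apply]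
  have hBA' (x) : Bℂ (Aℂ x) = 0 := by
    rw [← Module.End.mul_apply, ← LinearMap.baseChange_mul, hBA, LinearMap.baseChange_zero,
      LinearMap.zero_apply]
  have hAA' (x) : Aℂ (Aℂ x) = x + Bℂ (Bℂ x) := by
    rw [← Module.End.mul_apply, ← LinearMap.baseChange_mul, hAA, LinearMap.baseChange_add,
      LinearMap.baseChange_one, LinearMap.baseChange_mul]
    rfl
  have hgAB' : gℂ.compl₁₂ Aℂ Bℂ = 0 := by
    rw [← LinearMap.BilinForm.baseChange_compl₁₂, hgAB, LinearMap.BilinForm.baseChange_zero]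
  have hgBA' : gℂ.compl₁₂ Bℂ Aℂ = 0 := by
    rw [← LinearMap.BilinForm.baseChange_compl₁₂, hgBA, LinearMap.BilinForm.baseChange_zero]
  have hgAA' : gℂ.compl₁₂ Aℂ Aℂ - gℂ.compl₁₂ Bℂ Bℂ = -gℂ := by
    rw [← LinearMap.BilinForm.baseChange_compl₁₂, ← LinearMap.BilinForm.baseChange_compl₁₂,
      ← LinearMap.BilinForm.baseChange_sub, hgAA, LinearMap.BilinForm.baseChange_neg]
  refine ⟨fun x => ?_, fun x => ?_, fun x y => ?_, fun x y => ?_⟩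
  · simp [hAB', hBA', hAA', smul_smul]
  · simp [hAB', hBA', sub_eq_add_neg]
  all_goals
    have hAB := LinearMap.congr_fun₂ hgAB' x y
    have hBA := LinearMap.congr_fun₂ hgBA' x y
    have hAA := LinearMap.congr_fun₂ hgAA' x y
    simp only [LinearMap.compl₁₂_apply, LinearMap.sub_apply, LinearMap.neg_apply,
      LinearMap.zero_apply] at hAB hBA hAA
    simp only [map_add, map_sub, map_smul, LinearMap.add_apply, LinearMap.sub_apply,
      LinearMap.smul_apply, smul_eq_mul, hAB, hBA]
    linear_combination hAA + gℂ (Bℂ x) (Bℂ y) * Complex.I_sq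

end Complexification

section Codisjoint

variable {R M : Type*} [CommRing R] [AddCommGroup M] [Module R M] {S T : Submodule R M}

theorem LinearMap.BilinForm.ext_on_codisjoint (hc : Codisjoint S T)
    {B B' : LinearMap.BilinForm R M}
    (hSS : ∀ x ∈ S, ∀ y ∈ S, B x y = B' x y) (hST : ∀ x ∈ S, ∀ y ∈ T, B x y = B' x y)
    (hTS : ∀ x ∈ T, ∀ y ∈ S, B x y = B' x y) (hTT : ∀ x ∈ T, ∀ y ∈ T, B x y = B' x y) :
    B = B' :=
  LinearMap.ext_on_codisjoint hc
    (fun x hx => LinearMap.ext_on_codisjoint hc (hSS x hx) (hST x hx))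
    (fun x hx => LinearMap.ext_on_codisjoint hc (hTS x hx) (hTT x hx))

theorem mul_eq_zero_of_codisjoint (hc : Codisjoint S T) {f h : Module.End R M}
    (hfS : ∀ x ∈ S, f x = 0) (hhS : ∀ x ∈ S, h x ∈ S) (hhT : ∀ x ∈ T, h x = 0) :
    f * h = 0 :=
  LinearMap.ext_on_codisjoint hc (fun x hx => hfS _ (hhS x hx))
    (fun x hx => by simp [hhT x hx])

theorem mul_self_eq_one_add_mul_self_of_codisjoint (hc : Codisjoint S T)
    {I J : Module.End R M} (hIS : ∀ x ∈ S, I x = 0) (hIT : ∀ x ∈ T, I (I x) = x)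
    (hJS : ∀ x ∈ S, J (J x) = -x) (hJT : ∀ x ∈ T, J x = 0) :
    I * I = 1 + J * J :=
  LinearMap.ext_on_codisjoint hc (fun x hx => by simp [hIS x hx, hJS x hx])
    (fun x hx => by simp [hIT x hx, hJT x hx])

theorem compl₁₂_eq_zero_of_codisjoint (hc : Codisjoint S T) {g : LinearMap.BilinForm R M}
    (horth : ∀ x ∈ S, ∀ y ∈ T, g x y = 0) {f h : Module.End R M}
    (hfS : ∀ x ∈ S, f x ∈ S) (hfT : ∀ x ∈ T, f x = 0)
    (hhS : ∀ x ∈ S, h x = 0) (hhT : ∀ x ∈ T, h x ∈ T) :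
    g.compl₁₂ f h = 0 :=
  LinearMap.BilinForm.ext_on_codisjoint hc
    (fun x _ y hy => by simp [hhS y hy])
    (fun x hx y hy => horth _ (hfS x hx) _ (hhT y hy))
    (fun x hx y _ => by simp [hfT x hx])
    (fun x hx y _ => by simp [hfT x hx])

theorem compl₁₂_sub_compl₁₂_eq_neg_of_codisjoint (hc : Codisjoint S T)
    {g : LinearMap.BilinForm R M} (horth : ∀ x ∈ S, ∀ y ∈ T, g x y = 0)
    (horth' : ∀ x ∈ T, ∀ y ∈ S, g x y = 0) {I J : Module.End R M}
    (hIS : ∀ x ∈ S, I x = 0) (hJT : ∀ x ∈ T, J x = 0)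
    (hIg : ∀ x ∈ T, ∀ y ∈ T, g (I x) (I y) = -g x y)
    (hJg : ∀ x ∈ S, ∀ y ∈ S, g (J x) (J y) = g x y) :
    g.compl₁₂ I I - g.compl₁₂ J J = -g :=
  LinearMap.BilinForm.ext_on_codisjoint hc
    (fun x hx y hy => by simp [hIS x hx, hJg x hx y hy])
    (fun x hx y hy => by simp [hIS x hx, hJT y hy, horth x hx y hy])
    (fun x hx y hy => by simp [hIS y hy, hJT x hx, horth' x hx y hy])
    (fun x hx y hy => by simp [hJT x hx, hIg x hx y hy])

end Codisjoint

theorem mixedStructure_of_para_and_complex_general (V : Type*) [AddCommGroup V] [Module ℝ V]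
    (g : LinearMap.BilinForm ℝ V)
    (hsymm : ∀ x y, g x y = g y x)
    (V₁ V₂ : Submodule ℝ V) (hcompl : IsCompl V₁ V₂)
    (horth : ∀ x ∈ V₁, ∀ y ∈ V₂, g x y = 0)
    (J : V →ₗ[ℝ] V)
    (hJmap : ∀ x ∈ V₁, J x ∈ V₁) (hJzero : ∀ y ∈ V₂, J y = 0)
    (hJ2 : ∀ x ∈ V₁, J (J x) = -x)
    (hJg : ∀ x ∈ V₁, ∀ y ∈ V₁, g (J x) (J y) = g x y)
    (I : V →ₗ[ℝ] V)
    (hImap : ∀ x ∈ V₂, I x ∈ V₂) (hIzero : ∀ y ∈ V₁, I y = 0)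
    (hI2 : ∀ x ∈ V₂, I (I x) = x)
    (hIg : ∀ x ∈ V₂, ∀ y ∈ V₂, g (I x) (I y) = -g x y) :
    IsMixedStructure V g
      (LinearMap.baseChange ℂ I + Complex.I • LinearMap.baseChange ℂ J) := by
  have hV := hcompl.codisjoint
  have horth' : ∀ x ∈ V₂, ∀ y ∈ V₁, g x y = 0 := fun x hx y hy =>
    (hsymm x y).trans (horth y hy x hx)
  exact isMixedStructure_baseChange_add_I_smul g
    (mul_eq_zero_of_codisjoint hV hIzero hJmap hJzero)
    (mul_eq_zero_of_codisjoint hV.symm hJzero hImap hIzero)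
    (mul_self_eq_one_add_mul_self_of_codisjoint hV hIzero hI2 hJ2 hJzero)
    (compl₁₂_eq_zero_of_codisjoint hV.symm horth' hImap hIzero hJzero hJmap)
    (compl₁₂_eq_zero_of_codisjoint hV horth hJmap hJzero hIzero hImap)
    (compl₁₂_sub_compl₁₂_eq_neg_of_codisjoint hV horth horth' hIzero hJzero hIg hJg)

/-- Given a `g`-orthogonal decomposition `V = V₁ ⊕ V₂`, a metric-compatible complex
structure `J` on `V₁` and a metric-compatible paracomplex structure `I` on `V₂`
(each extended by zero to all of `V`), the map `K := I_ℂ + i·J_ℂ` on `V_ℂ = ℂ ⊗[ℝ] V`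
is a mixed structure on `(V, g)`. -/
theorem mixedStructure_of_para_and_complex (V : Type*) [AddCommGroup V] [Module ℝ V]
    [FiniteDimensional ℝ V] (g : LinearMap.BilinForm ℝ V)
    (hsymm : ∀ x y, g x y = g y x) (hnd : ∀ x, (∀ y, g x y = 0) → x = 0)
    (V₁ V₂ : Submodule ℝ V) (hcompl : IsCompl V₁ V₂)
    (horth : ∀ x ∈ V₁, ∀ y ∈ V₂, g x y = 0)
    (J : V →ₗ[ℝ] V)
    (hJmap : ∀ x ∈ V₁, J x ∈ V₁) (hJzero : ∀ y ∈ V₂, J y = 0)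
    (hJ2 : ∀ x ∈ V₁, J (J x) = -x)
    (hJg : ∀ x ∈ V₁, ∀ y ∈ V₁, g (J x) (J y) = g x y)
    (I : V →ₗ[ℝ] V)
    (hImap : ∀ x ∈ V₂, I x ∈ V₂) (hIzero : ∀ y ∈ V₁, I y = 0)
    (hI2 : ∀ x ∈ V₂, I (I x) = x)
    (hIg : ∀ x ∈ V₂, ∀ y ∈ V₂, g (I x) (I y) = -g x y) :
    IsMixedStructure V g
      (LinearMap.baseChange ℂ I + Complex.I • LinearMap.baseChange ℂ J) :=
  mixedStructure_of_para_and_complex_general V g hsymm V₁ V₂ hcompl horth J hJmap hJzero hJ2 hJg I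
    hImap hIzero hI2 hIg
end
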